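/- arXiv:1801.06631 — 2 statements merged into one kernel-verified Lean document; each statement's English description precedes it below -/
import Mathlib

section
/- For ε ≥ 0, the image of the moment map (μ₁, μ₂) = (−z, (ε/4)(x²+y²) + (1/2)∑_j (r_j + z − c_j)) on ℝ³ is exactly the convex region {(μ₁, μ₂) ∈ ℝ² : μ₂ + ∑_{j=1}^k (μ₁ + c_j) ≥ 0 for all k = 0, 1, ..., n}. -/
/-!
Fix the height `z = -μ₁`; then `μ₂` depends on `(x, y)` only through `ρ = x² + y² ≥ 0`, and as a
function of `ρ` it is continuous, monotone (as `ε ≥ 0`) and tends to `+∞`. Its image over the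
fibre is therefore `[μ₂(0), ∞)`, where `μ₂(0) = ∑ⱼ (z - cⱼ)⁺` because `|a| + a = 2a⁺`. As the
`cⱼ` increase, the positive terms `z - cⱼ` form an initial segment, so this sum is the largest of
the partial sums `∑_{j<k} (z - cⱼ)`, and `μ₂ ≥ μ₂(0)` is exactly the family of inequalities
`k = 0, …, n`.
-/

open Filter Finset

theorem Finset.sum_range_le_sum_range_posPart (a : ℕ → ℝ) {k n : ℕ} (hk : k ≤ n) :
    ∑ j ∈ range k, a j ≤ ∑ j ∈ range n, (a j)⁺ :=
  calc ∑ j ∈ range k, a j ≤ ∑ j ∈ range k, (a j)⁺ := sum_le_sum fun j _ => le_posPart (a j)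
    _ ≤ ∑ j ∈ range n, (a j)⁺ :=
      sum_le_sum_of_subset_of_nonneg (range_subset_range.2 hk) fun j _ _ => posPart_nonneg (a j)

theorem Finset.exists_sum_range_eq_sum_range_posPart {a : ℕ → ℝ} {n : ℕ}
    (ha : AntitoneOn a (Set.Iio n)) : ∃ k ≤ n, ∑ j ∈ range k, a j = ∑ j ∈ range n, (a j)⁺ := by
  induction n with
  | zero => exact ⟨0, le_rfl, by simp⟩
  | succ n ih =>
    obtain ⟨k, hkn, hk⟩ := ih (ha.mono (Set.Iio_subset_Iio n.le_succ))
    by_cases hpos : 0 < a n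
    · refine ⟨n + 1, le_rfl, sum_congr rfl fun j hj => (posPart_of_nonneg ?_).symm⟩
      have hjn : j < n + 1 := mem_range.1 hj
      exact hpos.le.trans (ha hjn n.lt_succ_self (Nat.lt_succ_iff.1 hjn))
    · refine ⟨k, hkn.trans n.le_succ, ?_⟩
      rw [sum_range_succ, posPart_of_nonpos (not_lt.1 hpos), add_zero, hk]

theorem Finset.sum_range_posPart_le_iff {a : ℕ → ℝ} {n : ℕ} (ha : AntitoneOn a (Set.Iio n))
    {t : ℝ} : ∑ j ∈ range n, (a j)⁺ ≤ t ↔ ∀ k ≤ n, ∑ j ∈ range k, a j ≤ t := by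
  refine ⟨fun h k hk => (sum_range_le_sum_range_posPart a hk).trans h, fun h => ?_⟩
  obtain ⟨k, hk, heq⟩ := exists_sum_range_eq_sum_range_posPart ha
  exact heq ▸ h k hk

/-- `μ₂` at a point with `x² + y² = ρ` and third coordinate `z`. -/
noncomputable def mu₂ (ε : ℝ) (n : ℕ) (c : ℕ → ℝ) (ρ z : ℝ) : ℝ :=
  ε / 4 * ρ + 1 / 2 * ∑ j ∈ range n, (√(ρ + (z - c j) ^ 2) + z - c j)

section mu₂

variable {ε : ℝ} {n : ℕ} (c : ℕ → ℝ) (z : ℝ)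

theorem mu₂_zero : mu₂ ε n c 0 z = ∑ j ∈ range n, (z - c j)⁺ := by
  simp only [mu₂, mul_zero, zero_add, Real.sqrt_sq_eq_abs, add_sub_assoc,
    abs_add_eq_two_nsmul_posPart, nsmul_eq_mul, ← mul_sum]
  ring

theorem continuous_mu₂ : Continuous fun ρ => mu₂ ε n c ρ z := by
  unfold mu₂
  fun_prop

theorem monotone_mu₂ (hε : 0 ≤ ε) : Monotone fun ρ => mu₂ ε n c ρ z := by
  intro ρ σ h
  dsimp only [mu₂]
  gcongr

theorem half_sqrt_add_sub_le_mu₂ (hε : 0 ≤ ε) (hn : 0 < n) {ρ : ℝ} (hρ : 0 ≤ ρ) :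
    (√ρ + (z - c 0)) / 2 ≤ mu₂ ε n c ρ z := by
  have hterm_nonneg (j : ℕ) : 0 ≤ √(ρ + (z - c j) ^ 2) + z - c j := by
    have : |z - c j| ≤ √(ρ + (z - c j) ^ 2) := Real.abs_le_sqrt (by linarith)
    linarith [neg_abs_le (z - c j)]
  have hfirst : √ρ + (z - c 0) ≤ ∑ j ∈ range n, (√(ρ + (z - c j) ^ 2) + z - c j) :=
    calc √ρ + (z - c 0) ≤ √(ρ + (z - c 0) ^ 2) + z - c 0 := by
          have : √ρ ≤ √(ρ + (z - c 0) ^ 2) := Real.sqrt_le_sqrt (by nlinarith)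
          linarith
      _ ≤ ∑ j ∈ range n, (√(ρ + (z - c j) ^ 2) + z - c j) :=
          single_le_sum (f := fun j => √(ρ + (z - c j) ^ 2) + z - c j)
            (fun j _ => hterm_nonneg j) (mem_range.2 hn)
  have : 0 ≤ ε / 4 * ρ := by positivity
  unfold mu₂
  linarith

theorem tendsto_mu₂_atTop (hε : 0 ≤ ε) (hn : 0 < n) :
    Tendsto (fun ρ => mu₂ ε n c ρ z) atTop atTop :=
  tendsto_atTop_mono' _ ((eventually_ge_atTop 0).mono fun _ => half_sqrt_add_sub_le_mu₂ c z hε hn)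
    ((Real.tendsto_sqrt_atTop.atTop_add tendsto_const_nhds).atTop_div_const two_pos)

theorem image_mu₂_Ici_zero (hε : 0 ≤ ε) (hn : 0 < n) :
    (fun ρ => mu₂ ε n c ρ z) '' Set.Ici 0 = Set.Ici (∑ j ∈ range n, (z - c j)⁺) := by
  rw [← mu₂_zero]
  exact (continuous_mu₂ c z).continuousOn.image_Ici_of_monotoneOn
    ((monotone_mu₂ c z hε).monotoneOn _) (tendsto_mu₂_atTop c z hε hn)

end mu₂

/-- For `ε ≥ 0`, the image of the moment map
`(μ₁,μ₂) = (−z, (ε/4)(x²+y²) + (1/2)∑_j (r_j + z − c_j))` on `ℝ³` is exactly the convex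
region `{(μ₁,μ₂) : μ₂ + ∑_{j=1}^k (μ₁+c_j) ≥ 0, k = 0,…,n}`. -/
theorem moment_map_image_eq
    (n : ℕ) (hn : 1 ≤ n) (c : ℕ → ℝ)
    (hc : ∀ i j : ℕ, i < j → j < n → c i < c j)
    (ε : ℝ) (hε : 0 ≤ ε) :
    {m : ℝ × ℝ | ∃ x y z : ℝ, m.1 = -z ∧
        m.2 = ε / 4 * (x ^ 2 + y ^ 2) + (1 / 2) * ∑ j ∈ Finset.range n,
          (Real.sqrt (x ^ 2 + y ^ 2 + (z - c j) ^ 2) + z - c j)} =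
    {m : ℝ × ℝ | ∀ k ≤ n, 0 ≤ m.2 + ∑ j ∈ Finset.range k, (m.1 + c j)} := by
  have hmono : StrictMonoOn c (Set.Iio n) := fun i _ j hj hij => hc i j hij hj
  have hanti (z : ℝ) : AntitoneOn (fun j => z - c j) (Set.Iio n) := fun i hi j hj hij =>
    sub_le_sub_left (hmono.monotoneOn hi hj hij) z
  ext ⟨μ₁, μ₂⟩
  calc (∃ x y z : ℝ, μ₁ = -z ∧ μ₂ = mu₂ ε n c (x ^ 2 + y ^ 2) z)
      ↔ μ₂ ∈ (fun ρ => mu₂ ε n c ρ (-μ₁)) '' Set.Ici 0 := by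
        constructor
        · rintro ⟨x, y, z, rfl, rfl⟩
          exact ⟨x ^ 2 + y ^ 2, Set.mem_Ici.2 (by positivity), by rw [neg_neg]⟩
        · rintro ⟨ρ, hρ, rfl⟩
          exact ⟨√ρ, 0, -μ₁, (neg_neg μ₁).symm, by rw [Real.sq_sqrt hρ, sq, mul_zero, add_zero]⟩
    _ ↔ ∀ k ≤ n, ∑ j ∈ range k, (-μ₁ - c j) ≤ μ₂ := by
        rw [image_mu₂_Ici_zero c _ hε hn]
        exact sum_range_posPart_le_iff (hanti _)
    _ ↔ ∀ k ≤ n, 0 ≤ μ₂ + ∑ j ∈ range k, (μ₁ + c j) := by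
        refine forall₂_congr fun k _ => ?_
        rw [← neg_le_iff_add_nonneg, ← sum_neg_distrib]
        simp only [neg_add']
end

section
/- For n = 1, c_1 = 0, ε = −a with a > 0: on the region Ω₋ where V_{−a} < 0 (i.e. ρ²+z² > 1/a²), the moment map coordinate μ₂ = −(a/4)ρ² + (1/2)(√(ρ²+z²)+z) satisfies μ₂ < (1 + az)²/(4a) = (1 − a μ₁)²/(4a). -/
/-- For `n = 1`, `c₁ = 0`, `ε = −a`, `a > 0`: on `Ω₋` (where `ρ²+z² > 1/a²`),
`μ₂ = −(a/4)ρ² + (1/2)(√(ρ²+z²)+z) < (1+az)²/(4a)`. -/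
theorem moment_image_Omega_minus
    (a : ℝ) (ha : 0 < a) (x y z : ℝ)
    (h : 1 / a ^ 2 < x ^ 2 + y ^ 2 + z ^ 2) :
    -(a / 4) * (x ^ 2 + y ^ 2) + (1 / 2) * (Real.sqrt (x ^ 2 + y ^ 2 + z ^ 2) + z)
      < (1 + a * z) ^ 2 / (4 * a) := by
  set s := x ^ 2 + y ^ 2 + z ^ 2 with hs
  have hs0 : 0 ≤ s := by positivity
  set r := Real.sqrt s with hr
  have hr2 : r ^ 2 = s := Real.sq_sqrt hs0
  have hra : 1 / a < r := by
    have h1 : (1 / a) ^ 2 < r ^ 2 := by rw [hr2]; simpa [div_pow] using h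
    nlinarith [Real.sqrt_nonneg s, one_div_pos.mpr ha]
  have key : a * r > 1 := by
    have := (div_lt_iff₀ ha).mp hra
    linarith
  rw [lt_div_iff₀ (by positivity : (0:ℝ) < 4 * a)]
  nlinarith [sq_nonneg (a * r - 1), hr2]
end
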